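/- (Per-round variance inequality from the proof of Theorem 6.) Under the oracle assumption with c₀c₁ ≥ 1, and with query probability π_t(x_t) = p_t that is F_{t−1}-measurable, the conditional variance σ_t² := E[(g_t − μ_y)² | F_{t−1}] satisfies, for every t: σ_t² ≤ c₀c₁ · σ*²_{t,(t)} + c₀ · ( Φ_t(x_t)/p_t − Φ_t(x_t)/p*_{1:t} ) almost surely, where σ*²_{t,(t)} is the conditional variance of g_t computed as if the fixed hindsight query probability p*_{1:t} ∈ [β, τ] had been used in place of p_t. -/

import Mathlib

/-
Write `F = f_t(x_t)` and `R = y_t − f_t(x_t)`, so that `g_t = F + R ξ_t / p_t`. Conditioning first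
on `ℱ_{t−1}` together with `(x_t, y_t)` replaces `ξ_t` by `p_t`, and `ξ_t² = ξ_t`; hence
`E[g_t | ℱ_{t−1}] = E[y_t | ℱ_{t−1}] = μ_y` and
`σ_t² = A + V / p_t` with `A = E[F² + 2FR | ℱ_{t−1}] − μ_y²` and `V = E[R² | ℱ_{t−1}]`, while
`σ*²_{t,(t)} = A + V / p*`. Since `A + V` is the conditional variance of `y_t` it is nonnegative,
and the oracle bounds `Φ_t / c₁ ≤ V ≤ c₀ Φ_t` turn the comparison of `A + V / p_t` with
`A + V / p*` into the claimed inequality.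
-/

open MeasureTheory ProbabilityTheory

/-- The setting of sequential active mean estimation with an `ℱ (t-1)`-measurable query
probability `p t ∈ [β, τ]` and a variance oracle `Φ t` (representing `Φ_t(x_t)`) satisfying
`(1/c₁) Φ_t(x_t) ≤ E[(y_t − f_t(x_t))² | ℱ_{t−1}] ≤ c₀ Φ_t(x_t)` a.s. with `c₀ c₁ ≥ 1` and
`0 ≤ Φ_t(x_t) ≤ B`. -/
structure ActiveQuerySetup (Ω : Type*) [m0 : MeasurableSpace Ω] where
  μ : Measure Ω
  isProb : IsProbabilityMeasure μ
  ℱ : Filtration ℕ m0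
  T : ℕ
  β : ℝ
  τ : ℝ
  hβ : 0 < β
  hβτ : β ≤ τ
  hτ : τ ≤ 1
  x : ℕ → Ω → ℝ
  y : ℕ → Ω → ℝ
  f : ℕ → Ω → ℝ → ℝ
  p : ℕ → Ω → ℝ
  ξ : ℕ → Ω → ℝ
  Φ : ℕ → Ω → ℝ
  c₀ : ℝ
  c₁ : ℝ
  B : ℝ
  /-- `(x t, y t)` is `ℱ t`-measurable. -/
  hx : ∀ t, Measurable[ℱ t] (x t)
  hy : ∀ t, Measurable[ℱ t] (y t)
  hξmeas : ∀ t, Measurable[ℱ t] (ξ t)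
  /-- the prediction model `f t` is an `ℱ (t-1)`-measurable random function -/
  hf : ∀ t, @Measurable (Ω × ℝ) ℝ ((ℱ (t - 1)).prod (borel ℝ)) _ (Function.uncurry (f t))
  /-- the query probability `p t` is `ℱ (t-1)`-measurable -/
  hpmeas : ∀ t, Measurable[ℱ (t - 1)] (p t)
  /-- the query probability lies in `[β, τ]` -/
  hpmem : ∀ t ω, p t ω ∈ Set.Icc β τ
  /-- `(x t, y t)` is independent of `ℱ (t-1)` -/
  hindep : ∀ t,
    Indep (MeasurableSpace.comap (fun ω => (x t ω, y t ω)) inferInstance) (ℱ (t - 1)) μ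
  /-- the pairs `(x t, y t)` are identically distributed -/
  hident : ∀ s t,
    Measure.map (fun ω => (x s ω, y s ω)) μ = Measure.map (fun ω => (x t ω, y t ω)) μ
  /-- `ξ t` is `{0,1}`-valued -/
  hξ01 : ∀ t, ∀ᵐ ω ∂μ, ξ t ω = 0 ∨ ξ t ω = 1
  /-- conditionally on `ℱ (t-1)` and `(x t, y t)`, the indicator `ξ t` has conditional mean
  `p t`: it is `Bernoulli (p t)` given the past and `x t`, and conditionally independent of
  `y t` given the past and `x t`. -/
  hξcond : ∀ t,
    μ[ξ t | (ℱ (t - 1)) ⊔ MeasurableSpace.comap (fun ω => (x t ω, y t ω)) inferInstance]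
      =ᵐ[μ] p t
  /-- the oracle output at time `t` is `ℱ t`-measurable -/
  hΦmeas : ∀ t, Measurable[ℱ t] (Φ t)
  hc₀ : 0 < c₀
  hc₁ : 0 < c₁
  hc₀c₁ : 1 ≤ c₀ * c₁
  hB : 0 < B
  /-- the oracle output is nonnegative and bounded by `B` -/
  hΦ_nonneg : ∀ t ω, 0 ≤ Φ t ω
  hΦ_le : ∀ t ω, Φ t ω ≤ B
  /-- the oracle approximates the conditional variance of the model residual from below -/
  horacle_lo : ∀ t, ∀ᵐ ω ∂μ,
    (1 / c₁) * Φ t ω ≤ (μ[fun ω' => (y t ω' - f t ω' (x t ω')) ^ 2 | ℱ (t - 1)]) ω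
  /-- and from above -/
  horacle_hi : ∀ t, ∀ᵐ ω ∂μ,
    (μ[fun ω' => (y t ω' - f t ω' (x t ω')) ^ 2 | ℱ (t - 1)]) ω ≤ c₀ * Φ t ω
  /-- integrability of the labels -/
  hyint : ∀ t, Integrable (y t) μ
  /-- integrability of the update direction -/
  hgint : ∀ t, Integrable
    (fun ω => f t ω (x t ω) + (y t ω - f t ω (x t ω)) * ξ t ω / p t ω) μ
  /-- square-integrability conditions -/
  hf2int : ∀ t, Integrable (fun ω => (f t ω (x t ω)) ^ 2) μ
  hr2int : ∀ t, Integrable (fun ω => (y t ω - f t ω (x t ω)) ^ 2) μ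
  hfrint : ∀ t, Integrable (fun ω => f t ω (x t ω) * (y t ω - f t ω (x t ω))) μ
  hg2int : ∀ t, Integrable
    (fun ω => (f t ω (x t ω) + (y t ω - f t ω (x t ω)) * ξ t ω / p t ω) ^ 2) μ

variable {Ω : Type*} [MeasurableSpace Ω]

/-- the update direction `g_t = f_t(x_t) + (y_t − f_t(x_t)) ξ_t / p_t` -/
noncomputable def g (S : ActiveQuerySetup Ω) (t : ℕ) (ω : Ω) : ℝ :=
  S.f t ω (S.x t ω) + (S.y t ω - S.f t ω (S.x t ω)) * S.ξ t ω / S.p t ω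

/-- the common mean `μ_y = E[y_t]` of the labels -/
noncomputable def μy (S : ActiveQuerySetup Ω) : ℝ := ∫ ω, S.y 1 ω ∂S.μ

/-- the conditional variance `σ_t² = E[(g_t − μ_y)² | ℱ_{t−1}]` -/
noncomputable def condVar (S : ActiveQuerySetup Ω) (t : ℕ) : Ω → ℝ :=
  S.μ[fun ω => (g S t ω - μy S) ^ 2 | S.ℱ (t - 1)]

/-- `σ*²_{s,(t)}`: the conditional variance of `g_s` computed as if the fixed hindsight query
probability `p*_{1:t}` had been used in place of `p_s`, i.e.
`E[f_s(x_s)² | ℱ_{s−1}] + (1/p*_{1:t}) E[(y_s − f_s(x_s))² | ℱ_{s−1}]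
 + 2 E[f_s(x_s)(y_s − f_s(x_s)) | ℱ_{s−1}] − μ_y²`. -/
noncomputable def sigmaStarSq (S : ActiveQuerySetup Ω) (pstar : ℕ → Ω → ℝ) (s t : ℕ)
    (ω : Ω) : ℝ :=
  (S.μ[fun ω' => (S.f s ω' (S.x s ω')) ^ 2 | S.ℱ (s - 1)]) ω
    + (1 / pstar t ω) * (S.μ[fun ω' => (S.y s ω' - S.f s ω' (S.x s ω')) ^ 2 | S.ℱ (s - 1)]) ω
    + 2 * (S.μ[fun ω' => S.f s ω' (S.x s ω') * (S.y s ω' - S.f s ω' (S.x s ω'))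
        | S.ℱ (s - 1)]) ω
    - (μy S) ^ 2

/-- `p*_{1:t} = argmin_{p ∈ [β,τ]} Σ_{s=1}^t Φ_s(x_s)/p`: the best fixed query probability in
hindsight over the first `t` rounds. -/
def IsHindsightBest (S : ActiveQuerySetup Ω) (pstar : ℕ → Ω → ℝ) : Prop :=
  ∀ t ω, pstar t ω ∈ Set.Icc S.β S.τ ∧
    ∀ q ∈ Set.Icc S.β S.τ,
      (∑ s ∈ Finset.Icc 1 t, S.Φ s ω / pstar t ω) ≤ ∑ s ∈ Finset.Icc 1 t, S.Φ s ω / q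

section QueryIndicator

variable {α : Type*}

noncomputable def ipwEstimate (F R ξ p : α → ℝ) (ω : α) : ℝ := F ω + R ω * ξ ω / p ω

structure IsQueryIndicator (m G : MeasurableSpace α) {m₀ : MeasurableSpace α} (μ : Measure[m₀] α)
    (β : ℝ) (ξ p : α → ℝ) : Prop where
  measurable : Measurable[m₀] ξ
  zero_or_one : ∀ᵐ ω ∂μ, ξ ω = 0 ∨ ξ ω = 1
  condExp_eq : μ[ξ | G] =ᵐ[μ] p
  stronglyMeasurable_prob : StronglyMeasurable[m] p
  pos : 0 < β
  le_prob : ∀ ω, β ≤ p ω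

variable {m G m₀ : MeasurableSpace α} {μ : Measure α}

namespace IsQueryIndicator

variable {β : ℝ} {ξ p : α → ℝ}

lemma one [IsFiniteMeasure μ] (hG : G ≤ m₀) : IsQueryIndicator m G μ 1 1 1 where
  measurable := measurable_const
  zero_or_one := Filter.Eventually.of_forall fun _ => Or.inr rfl
  condExp_eq := (condExp_const hG (1 : ℝ)).eventuallyEq
  stronglyMeasurable_prob := stronglyMeasurable_const
  pos := one_pos
  le_prob _ := le_rfl

lemma norm_div_pow_le (hw : IsQueryIndicator m G μ β ξ p) (c : ℝ) (n : ℕ) (ω : α) :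
    ‖c / p ω ^ n‖ ≤ ‖c‖ / β ^ n := by
  have hβp := hw.le_prob ω
  rw [norm_div, norm_pow, Real.norm_of_nonneg (hw.pos.le.trans hβp)]
  exact div_le_div_of_nonneg_left (norm_nonneg c) (pow_pos hw.pos n)
    (pow_le_pow_left₀ hw.pos.le hβp n)

lemma integrable [IsFiniteMeasure μ] (hw : IsQueryIndicator m G μ β ξ p) : Integrable ξ μ := by
  refine (integrable_const (1 : ℝ)).mono' hw.measurable.aestronglyMeasurable ?_
  filter_upwards [hw.zero_or_one] with ω hξ
  rcases hξ with hξ | hξ <;> simp [hξ]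

lemma integrable_mul_mul (hw : IsQueryIndicator m G μ β ξ p) {k h : α → ℝ} {C : ℝ}
    (hk : AEStronglyMeasurable k μ) (hkC : ∀ ω, ‖k ω‖ ≤ C) (hh : Integrable h μ) :
    Integrable (fun ω => k ω * h ω * ξ ω) μ := by
  have hkξ : ∀ᵐ ω ∂μ, ‖k ω * ξ ω‖ ≤ C := by
    filter_upwards [hw.zero_or_one] with ω hξ
    rcases hξ with hξ | hξ
    · simpa [hξ] using (norm_nonneg _).trans (hkC ω)
    · simpa [hξ] using hkC ω
  refine (hh.bdd_mul (hk.mul hw.measurable.aestronglyMeasurable) hkξ).congr ?_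
  filter_upwards with ω
  simp only [Pi.mul_apply]
  ring

lemma condExp_mul_mul [IsFiniteMeasure μ] (hw : IsQueryIndicator m G μ β ξ p) (hmG : m ≤ G)
    (hG : G ≤ m₀) {k h : α → ℝ} {C : ℝ} (hk : StronglyMeasurable[m] k) (hkC : ∀ ω, ‖k ω‖ ≤ C)
    (hh : StronglyMeasurable[G] h) (hhi : Integrable h μ) :
    μ[fun ω => k ω * h ω * ξ ω | m] =ᵐ[μ] fun ω => k ω * p ω * μ[h | m] ω := by
  have hkh : StronglyMeasurable[G] (k * h) := (hk.mono hmG).mul hh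
  have hkhξ := hw.integrable_mul_mul (hk.mono (hmG.trans hG)).aestronglyMeasurable hkC hhi
  have hinner : μ[fun ω => k ω * h ω * ξ ω | G] =ᵐ[μ] fun ω => k ω * p ω * h ω := by
    filter_upwards [condExp_mul_of_stronglyMeasurable_left hkh hkhξ hw.integrable,
      hw.condExp_eq] with ω h₁ h₂
    refine h₁.trans ?_
    simp only [Pi.mul_apply]
    rw [h₂]
    ring
  calc μ[fun ω => k ω * h ω * ξ ω | m]
      =ᵐ[μ] μ[μ[fun ω => k ω * h ω * ξ ω | G] | m] := (condExp_condExp_of_le hmG hG).symm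
    _ =ᵐ[μ] μ[(k * p) * h | m] := condExp_congr_ae hinner
    _ =ᵐ[μ] fun ω => k ω * p ω * μ[h | m] ω :=
      condExp_mul_of_stronglyMeasurable_left (hk.mul hw.stronglyMeasurable_prob)
        (integrable_condExp.congr hinner) hhi

lemma integrable_div_pow_mul_mul [IsFiniteMeasure μ] (hw : IsQueryIndicator m G μ β ξ p)
    (hm : m ≤ m₀) (c : ℝ) (n : ℕ) {h : α → ℝ} (hh : Integrable h μ) :
    Integrable (fun ω => c / p ω ^ n * h ω * ξ ω) μ :=
  hw.integrable_mul_mul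
    ((measurable_const.div (hw.stronglyMeasurable_prob.measurable.pow_const n)).mono hm
      le_rfl).aestronglyMeasurable (hw.norm_div_pow_le c n) hh

lemma condExp_div_pow_mul_mul [IsFiniteMeasure μ] (hw : IsQueryIndicator m G μ β ξ p)
    (hmG : m ≤ G) (hG : G ≤ m₀) (c : ℝ) (n : ℕ) {h : α → ℝ} (hh : StronglyMeasurable[G] h)
    (hhi : Integrable h μ) :
    μ[fun ω => c / p ω ^ n * h ω * ξ ω | m] =ᵐ[μ] fun ω => c / p ω ^ n * p ω * μ[h | m] ω :=
  hw.condExp_mul_mul hmG hG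
    (measurable_const.div (hw.stronglyMeasurable_prob.measurable.pow_const n)).stronglyMeasurable
    (hw.norm_div_pow_le c n) hh hhi

lemma prob_ne_zero (hw : IsQueryIndicator m G μ β ξ p) (ω : α) : p ω ≠ 0 :=
  (hw.pos.trans_le (hw.le_prob ω)).ne'

lemma condExp_ipwEstimate [IsFiniteMeasure μ] (hw : IsQueryIndicator m G μ β ξ p)
    (hmG : m ≤ G) (hG : G ≤ m₀) {F R : α → ℝ} (hF : Integrable F μ)
    (hR : StronglyMeasurable[G] R) (hRi : Integrable R μ) :
    μ[ipwEstimate F R ξ p | m] =ᵐ[μ] μ[F + R | m] := by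
  have hsplit : ipwEstimate F R ξ p = F + fun ω => 1 / p ω ^ 1 * R ω * ξ ω := by
    funext ω
    simp only [ipwEstimate, Pi.add_apply, pow_one]
    ring
  calc μ[ipwEstimate F R ξ p | m]
      =ᵐ[μ] μ[F | m] + μ[fun ω => 1 / p ω ^ 1 * R ω * ξ ω | m] := by
        rw [hsplit]
        exact condExp_add hF (hw.integrable_div_pow_mul_mul (hmG.trans hG) 1 1 hRi) m
    _ =ᵐ[μ] μ[F | m] + μ[R | m] := by
        filter_upwards [hw.condExp_div_pow_mul_mul hmG hG 1 1 hR hRi] with ω h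
        rw [Pi.add_apply, Pi.add_apply, h, pow_one, one_div_mul_cancel (hw.prob_ne_zero ω),
          one_mul]
    _ =ᵐ[μ] μ[F + R | m] := (condExp_add hF hRi m).symm

/-- The second moment of the estimate: `ξ² = ξ` leaves a single factor `1 / p` on `R²`. -/
lemma condExp_ipwEstimate_sq [IsFiniteMeasure μ] (hw : IsQueryIndicator m G μ β ξ p)
    (hmG : m ≤ G) (hG : G ≤ m₀) {F R : α → ℝ} (hF : StronglyMeasurable[G] F)
    (hR : StronglyMeasurable[G] R) (hF2 : Integrable (fun ω => F ω ^ 2) μ)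
    (hR2 : Integrable (fun ω => R ω ^ 2) μ) (hFR : Integrable (fun ω => F ω * R ω) μ) :
    μ[fun ω => ipwEstimate F R ξ p ω ^ 2 | m] =ᵐ[μ] fun ω =>
      μ[fun ω => F ω ^ 2 | m] ω + 1 / p ω * μ[fun ω => R ω ^ 2 | m] ω
        + 2 * μ[fun ω => F ω * R ω | m] ω := by
  have hm := hmG.trans hG
  have hcross := hw.integrable_div_pow_mul_mul hm 2 1 hFR
  have hsquare := hw.integrable_div_pow_mul_mul hm 1 2 hR2
  have hexpand : (fun ω => ipwEstimate F R ξ p ω ^ 2) =ᵐ[μ] (fun ω => F ω ^ 2)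
      + ((fun ω => 2 / p ω ^ 1 * (F ω * R ω) * ξ ω) + fun ω => 1 / p ω ^ 2 * R ω ^ 2 * ξ ω) := by
    filter_upwards [hw.zero_or_one] with ω hξ
    have hp := hw.prob_ne_zero ω
    rcases hξ with hξ | hξ <;> simp only [ipwEstimate, hξ, Pi.add_apply] <;> field_simp <;> ring
  calc μ[fun ω => ipwEstimate F R ξ p ω ^ 2 | m]
      =ᵐ[μ] μ[fun ω => F ω ^ 2 | m] + (μ[fun ω => 2 / p ω ^ 1 * (F ω * R ω) * ξ ω | m]
          + μ[fun ω => 1 / p ω ^ 2 * R ω ^ 2 * ξ ω | m]) :=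
        (condExp_congr_ae hexpand).trans <| (condExp_add hF2 (hcross.add hsquare) m).trans <|
          Filter.EventuallyEq.rfl.add (condExp_add hcross hsquare m)
    _ =ᵐ[μ] _ := by
        filter_upwards [hw.condExp_div_pow_mul_mul hmG hG 2 1 (h := fun ω => F ω * R ω)
          (hF.mul hR) hFR, hw.condExp_div_pow_mul_mul hmG hG 1 2 (h := fun ω => R ω ^ 2)
          (hR.pow 2) hR2] with ω hcrossω hsquareω
        have hp := hw.prob_ne_zero ω
        simp only [Pi.add_apply, hcrossω, hsquareω]
        field_simp
        ring

end IsQueryIndicator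

lemma condExp_sub_const_sq [IsFiniteMeasure μ] (hm : m ≤ m₀) {X : α → ℝ} {c : ℝ} (hX : MemLp X 2 μ)
    (hc : μ[X | m] =ᵐ[μ] fun _ => c) :
    μ[fun ω => (X ω - c) ^ 2 | m] =ᵐ[μ] fun ω => μ[fun ω => X ω ^ 2 | m] ω - c ^ 2 := by
  have hcenter : (fun ω => (X ω - c) ^ 2) =ᵐ[μ] (X - μ[X | m]) ^ 2 := by
    filter_upwards [hc] with ω h
    simp [h]
  filter_upwards [condExp_congr_ae hcenter, condVar_ae_eq_condExp_sq_sub_sq_condExp hm hX, hc]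
    with ω h₁ h₂ h₃
  rw [h₁]
  exact h₂.trans (by rw [Pi.sub_apply, Pi.pow_apply, h₃]; rfl)

end QueryIndicator

lemma add_one_div_mul_le_of_oracle {A V Φ p q c₀ c₁ : ℝ} (hp : 0 < p) (hp1 : p ≤ 1)
    (hq : 0 < q) (hq1 : q ≤ 1) (hlo : 1 / c₁ * Φ ≤ V) (hhi : V ≤ c₀ * Φ) (hAV : 0 ≤ A + V)
    (hc₀ : 0 < c₀) (hc₁ : 0 < c₁) (hc₀c₁ : 1 ≤ c₀ * c₁) :
    A + 1 / p * V ≤ c₀ * c₁ * (A + 1 / q * V) + c₀ * (Φ / p - Φ / q) := by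
  have hΦ : Φ ≤ c₁ * V := by
    rwa [one_div_mul_eq_div, div_le_iff₀' hc₁] at hlo
  have hinvp : 1 ≤ 1 / p := one_le_one_div hp hp1
  have hinvq : 1 ≤ 1 / q := one_le_one_div hq hq1
  have h₁ : 0 ≤ (c₀ * c₁ - 1) * (A + V) := mul_nonneg (by linarith) hAV
  have h₂ : 0 ≤ c₀ * (c₁ * V - Φ) * (1 / q - 1) :=
    mul_nonneg (mul_nonneg hc₀.le (by linarith)) (by linarith)
  have h₃ : 0 ≤ (c₀ * Φ - V) * (1 / p - 1) := mul_nonneg (by linarith) (by linarith)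
  linear_combination h₁ + h₂ + h₃

namespace ActiveQuerySetup

variable (S : ActiveQuerySetup Ω) (t : ℕ)

abbrev pastAndSample : MeasurableSpace Ω :=
  S.ℱ (t - 1) ⊔ MeasurableSpace.comap (fun ω => (S.x t ω, S.y t ω)) inferInstance

lemma measurable_sample : Measurable fun ω => (S.x t ω, S.y t ω) :=
  ((S.hx t).mono (S.ℱ.le t) le_rfl).prodMk ((S.hy t).mono (S.ℱ.le t) le_rfl)

lemma le_pastAndSample : S.ℱ (t - 1) ≤ S.pastAndSample t := le_sup_left

lemma pastAndSample_le : S.pastAndSample t ≤ ‹MeasurableSpace Ω› :=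
  sup_le (S.ℱ.le _) (S.measurable_sample t).comap_le

lemma measurable_sample_pastAndSample :
    Measurable[S.pastAndSample t] fun ω => (S.x t ω, S.y t ω) :=
  (comap_measurable _).mono le_sup_right le_rfl

lemma stronglyMeasurable_pred :
    StronglyMeasurable[S.pastAndSample t] fun ω => S.f t ω (S.x t ω) :=
  ((S.hf t).comp ((measurable_id'' (S.le_pastAndSample t)).prodMk
    (measurable_fst.comp (S.measurable_sample_pastAndSample t)))).stronglyMeasurable

lemma stronglyMeasurable_resid :
    StronglyMeasurable[S.pastAndSample t] fun ω => S.y t ω - S.f t ω (S.x t ω) :=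
  (measurable_snd.comp (S.measurable_sample_pastAndSample t)).stronglyMeasurable.sub
    (S.stronglyMeasurable_pred t)

lemma isQueryIndicator :
    IsQueryIndicator (S.ℱ (t - 1)) (S.pastAndSample t) S.μ S.β (S.ξ t) (S.p t) where
  measurable := (S.hξmeas t).mono (S.ℱ.le t) le_rfl
  zero_or_one := S.hξ01 t
  condExp_eq := S.hξcond t
  stronglyMeasurable_prob := (S.hpmeas t).stronglyMeasurable
  pos := S.hβ
  le_prob ω := (S.hpmem t ω).1

lemma g_eq_ipwEstimate :
    g S t = ipwEstimate (fun ω => S.f t ω (S.x t ω)) (fun ω => S.y t ω - S.f t ω (S.x t ω))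
      (S.ξ t) (S.p t) := rfl

lemma memLp_pred : MemLp (fun ω => S.f t ω (S.x t ω)) 2 S.μ :=
  (memLp_two_iff_integrable_sq ((S.stronglyMeasurable_pred t).mono
    (S.pastAndSample_le t)).aestronglyMeasurable).2 (S.hf2int t)

lemma memLp_resid : MemLp (fun ω => S.y t ω - S.f t ω (S.x t ω)) 2 S.μ :=
  (memLp_two_iff_integrable_sq ((S.stronglyMeasurable_resid t).mono
    (S.pastAndSample_le t)).aestronglyMeasurable).2 (S.hr2int t)

lemma memLp_y : MemLp (S.y t) 2 S.μ := by
  convert (S.memLp_pred t).add (S.memLp_resid t) using 1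
  funext ω
  simp

lemma memLp_g : MemLp (g S t) 2 S.μ := by
  have hmeas : Measurable (g S t) :=
    ((S.stronglyMeasurable_pred t).measurable.mono (S.pastAndSample_le t) le_rfl).add
      ((((S.stronglyMeasurable_resid t).measurable.mono (S.pastAndSample_le t) le_rfl).mul
        ((S.hξmeas t).mono (S.ℱ.le t) le_rfl)).div ((S.hpmeas t).mono (S.ℱ.le _) le_rfl))
  exact (memLp_two_iff_integrable_sq hmeas.aestronglyMeasurable).2 (S.hg2int t)

lemma integral_y : ∫ ω, S.y t ω ∂S.μ = μy S :=
  (IdentDistrib.comp ⟨(S.measurable_sample t).aemeasurable,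
    (S.measurable_sample 1).aemeasurable, S.hident t 1⟩ measurable_snd).integral_eq

lemma condExp_y : S.μ[S.y t | S.ℱ (t - 1)] =ᵐ[S.μ] fun _ => μy S := by
  have := S.isProb
  rw [← S.integral_y t]
  exact condExp_indep_eq (S.measurable_sample t).comap_le (S.ℱ.le _)
    (measurable_snd.comp (comap_measurable _)).stronglyMeasurable (S.hindep t)

lemma condExp_g : S.μ[g S t | S.ℱ (t - 1)] =ᵐ[S.μ] fun _ => μy S := by
  have := S.isProb
  have hy : ((fun ω => S.f t ω (S.x t ω)) + fun ω => S.y t ω - S.f t ω (S.x t ω)) = S.y t := by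
    funext ω
    simp
  rw [g_eq_ipwEstimate]
  refine ((S.isQueryIndicator t).condExp_ipwEstimate (S.le_pastAndSample t)
    (S.pastAndSample_le t) ((S.memLp_pred t).integrable one_le_two)
    (S.stronglyMeasurable_resid t) ((S.memLp_resid t).integrable one_le_two)).trans ?_
  rw [hy]
  exact S.condExp_y t

lemma condVar_eq_sigmaStarSq : condVar S t =ᵐ[S.μ] sigmaStarSq S S.p t t := by
  have := S.isProb
  have hσ := condExp_sub_const_sq (S.ℱ.le _) (S.memLp_g t) (S.condExp_g t)
  rw [g_eq_ipwEstimate] at hσ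
  filter_upwards [hσ, (S.isQueryIndicator t).condExp_ipwEstimate_sq (S.le_pastAndSample t)
    (S.pastAndSample_le t) (S.stronglyMeasurable_pred t) (S.stronglyMeasurable_resid t)
    (S.hf2int t) (S.hr2int t) (S.hfrint t)] with ω h₁ h₂
  rw [_root_.condVar, g_eq_ipwEstimate, h₁, h₂, sigmaStarSq]

/-- With the constant query probability `1` the estimate `g_t` is `y_t` itself, so this is the
conditional variance of `y_t`. -/
lemma sigmaStarSq_one_nonneg : 0 ≤ᵐ[S.μ] sigmaStarSq S 1 t t := by
  have := S.isProb
  have hy : ipwEstimate (fun ω => S.f t ω (S.x t ω)) (fun ω => S.y t ω - S.f t ω (S.x t ω)) 1 1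
      = S.y t := by
    funext ω
    simp [ipwEstimate]
  have hone : IsQueryIndicator (S.ℱ (t - 1)) (S.pastAndSample t) S.μ 1 1 1 :=
    .one (S.pastAndSample_le t)
  have hsq := hone.condExp_ipwEstimate_sq (S.le_pastAndSample t) (S.pastAndSample_le t)
    (S.stronglyMeasurable_pred t) (S.stronglyMeasurable_resid t) (S.hf2int t) (S.hr2int t)
    (S.hfrint t)
  rw [hy] at hsq
  filter_upwards [condExp_sub_const_sq (S.ℱ.le _) (S.memLp_y t) (S.condExp_y t), hsq,
    condExp_nonneg (m := S.ℱ (t - 1)) (Filter.Eventually.of_forall fun ω =>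
      sq_nonneg (S.y t ω - μy S))] with ω h₁ h₂ h₃
  simp only [sigmaStarSq, Pi.one_apply, Pi.zero_apply] at h₂ h₃ ⊢
  linarith

lemma sigmaStarSq_eq_of_one (q : ℕ → Ω → ℝ) (s t : ℕ) (ω : Ω) :
    sigmaStarSq S q s t ω = sigmaStarSq S 1 s t ω
      - S.μ[fun ω' => (S.y s ω' - S.f s ω' (S.x s ω')) ^ 2 | S.ℱ (s - 1)] ω
      + 1 / q t ω * S.μ[fun ω' => (S.y s ω' - S.f s ω' (S.x s ω')) ^ 2 | S.ℱ (s - 1)] ω := by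
  simp only [sigmaStarSq, Pi.one_apply]
  ring

end ActiveQuerySetup

/-- **Per-round variance inequality (from the proof of Theorem 6).** Under the oracle
assumption with `c₀ c₁ ≥ 1` and `ℱ_{t−1}`-measurable query probabilities `p_t ∈ [β,τ]`, for
every round `t`:
`σ_t² ≤ c₀c₁ σ*²_{t,(t)} + c₀ (Φ_t(x_t)/p_t − Φ_t(x_t)/p*_{1:t})` a.s. -/
theorem per_round_variance_bound (S : ActiveQuerySetup Ω)
    (pstar : ℕ → Ω → ℝ) (hpstar : IsHindsightBest S pstar) :
    ∀ t, 1 ≤ t → ∀ᵐ ω ∂S.μ,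
      condVar S t ω ≤
        S.c₀ * S.c₁ * sigmaStarSq S pstar t t ω
          + S.c₀ * (S.Φ t ω / S.p t ω - S.Φ t ω / pstar t ω) := by
  intro t _
  filter_upwards [S.condVar_eq_sigmaStarSq t, S.sigmaStarSq_one_nonneg t, S.horacle_lo t,
    S.horacle_hi t] with ω hσ hnonneg hlo hhi
  obtain ⟨hβq, hqτ⟩ := (hpstar t ω).1
  obtain ⟨hβp, hpτ⟩ := S.hpmem t ω
  rw [hσ, S.sigmaStarSq_eq_of_one, S.sigmaStarSq_eq_of_one pstar]
  exact add_one_div_mul_le_of_oracle (S.hβ.trans_le hβp) (hpτ.trans S.hτ) (S.hβ.trans_le hβq)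
    (hqτ.trans S.hτ) hlo hhi (by rwa [sub_add_cancel]) S.hc₀ S.hc₁ S.hc₀c₁
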